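/- For any classifier h : 𝒳 → Bool and any predicate φ on a finite type 𝒳 with at least one point satisfying φ not in the image constraint, the influence ι is (ε, γ/2)-unconstrained: there exist h₁, h₂ agreeing with h on the event ¬φ(X) up to probability ε such that ι(h₁) ≥ γ/2 and ι(h₂) ≤ 1 - γ/2, given P(φ(X)) ≤ ε and P(φ(X_cf) ∧ ¬φ(X)) = γ. -/

import Mathlib

/-!
Overwrite `h` by a constant `c` on `{φ}`. Since `P(φ(X)) ≤ ε`, every such overwrite is `ε`-close
to `h`. On the event `φ(X_cf) ∧ ¬φ(X)` (probability `γ`) the overwrite takes the value `h(X)` at `X`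
and `c` at `X_cf`. Let `b` be a value taken by `h(X)` on at least half of this event: `c = !b`
makes the classifier flip on mass `≥ γ/2`, and `c = b` makes it stay put on mass `≥ γ/2`.
-/

open Finset

noncomputable def Pr {Ω : Type*} [Fintype Ω] (p : Ω → ℝ) (E : Ω → Prop) [DecidablePred E] : ℝ :=
  ∑ ω, if E ω then p ω else 0

section Pr

variable {Ω : Type*} [Fintype Ω] {p : Ω → ℝ}

lemma Pr_mono (hp : ∀ ω, 0 ≤ p ω) {E F : Ω → Prop} [DecidablePred E] [DecidablePred F]
    (hEF : ∀ ω, E ω → F ω) : Pr p E ≤ Pr p F :=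
  sum_le_sum fun ω _ => by
    by_cases hE : E ω
    · simp [hE, hEF ω hE]
    · simp only [hE, if_false]
      split_ifs <;> simp [hp ω]

lemma Pr_add_Pr_not (hsum : ∑ ω, p ω = 1) (E : Ω → Prop) [DecidablePred E] :
    Pr p E + Pr p (fun ω => ¬E ω) = 1 := by
  rw [← hsum, Pr, Pr, ← sum_add_distrib]
  exact sum_congr rfl fun ω _ => by by_cases hE : E ω <;> simp [hE]

lemma Pr_and_eq_true_add_Pr_and_eq_false (A : Ω → Prop) [DecidablePred A] (f : Ω → Bool) :
    Pr p (fun ω => A ω ∧ f ω = true) + Pr p (fun ω => A ω ∧ f ω = false) = Pr p A := by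
  rw [Pr, Pr, Pr, ← sum_add_distrib]
  exact sum_congr rfl fun ω _ => by by_cases hA : A ω <;> cases f ω <;> simp [hA]

lemma exists_half_Pr_le_Pr_and_eq (A : Ω → Prop) [DecidablePred A] (f : Ω → Bool) :
    ∃ b, Pr p A / 2 ≤ Pr p (fun ω => A ω ∧ f ω = b) := by
  by_cases htrue : Pr p A / 2 ≤ Pr p (fun ω => A ω ∧ f ω = true)
  · exact ⟨true, htrue⟩
  · exact ⟨false, by linarith [Pr_and_eq_true_add_Pr_and_eq_false (p := p) A f]⟩

end Pr

section overrideOn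

variable {𝒳 : Type*} (φ : 𝒳 → Prop) [DecidablePred φ] (c : Bool) (h : 𝒳 → Bool)

def overrideOn : 𝒳 → Bool := fun x => if φ x then c else h x

variable {φ c h}

@[simp]
lemma overrideOn_of_pos {x : 𝒳} (hx : φ x) : overrideOn φ c h x = c := if_pos hx

@[simp]
lemma overrideOn_of_neg {x : 𝒳} (hx : ¬φ x) : overrideOn φ c h x = h x := if_neg hx

lemma Pr_ne_overrideOn_le {Ω : Type*} [Fintype Ω] {p : Ω → ℝ} (hp : ∀ ω, 0 ≤ p ω) (X : Ω → 𝒳) :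
    Pr p (fun ω => h (X ω) ≠ overrideOn φ c h (X ω)) ≤ Pr p (fun ω => φ (X ω)) :=
  Pr_mono hp fun _ hne => by_contra fun hφ => hne (overrideOn_of_neg hφ).symm

end overrideOn

theorem influence_unconstrained_general {Ω 𝒳 : Type*} [Fintype Ω]
    (p : Ω → ℝ) (hp : ∀ ω, 0 ≤ p ω) (hsum : ∑ ω, p ω = 1)
    (X Xcf : Ω → 𝒳) (φ : 𝒳 → Prop) [DecidablePred φ] (ε γ : ℝ)
    (hε : Pr p (fun ω => φ (X ω)) ≤ ε)
    (hγ : Pr p (fun ω => φ (Xcf ω) ∧ ¬φ (X ω)) = γ)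
    (h : 𝒳 → Bool) :
    ∃ h₁ h₂ : 𝒳 → Bool,
      Pr p (fun ω => h (X ω) ≠ h₁ (X ω)) ≤ ε ∧
      Pr p (fun ω => h (X ω) ≠ h₂ (X ω)) ≤ ε ∧
      γ / 2 ≤ Pr p (fun ω => h₁ (X ω) ≠ h₁ (Xcf ω)) ∧
      Pr p (fun ω => h₂ (X ω) ≠ h₂ (Xcf ω)) ≤ 1 - γ / 2 := by
  obtain ⟨b, hb⟩ :=
    exists_half_Pr_le_Pr_and_eq (p := p) (fun ω => φ (Xcf ω) ∧ ¬φ (X ω)) (fun ω => h (X ω))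
  rw [hγ] at hb
  refine ⟨overrideOn φ (!b) h, overrideOn φ b h, (Pr_ne_overrideOn_le hp X).trans hε,
    (Pr_ne_overrideOn_le hp X).trans hε, ?_, ?_⟩
  · exact hb.trans <| Pr_mono hp fun ω ⟨⟨hcf, hx⟩, hhb⟩ => by simp [hcf, hx, hhb]
  · have hstay : γ / 2 ≤ Pr p (fun ω => ¬overrideOn φ b h (X ω) ≠ overrideOn φ b h (Xcf ω)) :=
      hb.trans <| Pr_mono hp fun ω ⟨⟨hcf, hx⟩, hhb⟩ => by simp [hcf, hx, hhb]
    linarith [Pr_add_Pr_not hsum (fun ω => overrideOn φ b h (X ω) ≠ overrideOn φ b h (Xcf ω))]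

/-- Theorem 1 (full): given `P(φ(X)) ≤ ε` and `P(φ(X_cf) ∧ ¬φ(X)) = γ`, the
influence measure is `(ε, γ/2)`-unconstrained for any classifier `h`: there are
`h₁, h₂` each within `ε` of `h` on the data distribution with `ι(h₁) ≥ γ/2`
and `ι(h₂) ≤ 1 - γ/2`. -/
theorem influence_unconstrained {Ω 𝒳 : Type*} [Fintype Ω] [Fintype 𝒳] [DecidableEq 𝒳]
    (p : Ω → ℝ) (hp : ∀ ω, 0 ≤ p ω) (hsum : ∑ ω, p ω = 1)
    (X Xcf : Ω → 𝒳) (φ : 𝒳 → Prop) [DecidablePred φ] (ε γ : ℝ)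
    (hε : Pr p (fun ω => φ (X ω)) ≤ ε)
    (hγ : Pr p (fun ω => φ (Xcf ω) ∧ ¬φ (X ω)) = γ)
    (h : 𝒳 → Bool) :
    ∃ h₁ h₂ : 𝒳 → Bool,
      Pr p (fun ω => h (X ω) ≠ h₁ (X ω)) ≤ ε ∧
      Pr p (fun ω => h (X ω) ≠ h₂ (X ω)) ≤ ε ∧
      γ / 2 ≤ Pr p (fun ω => h₁ (X ω) ≠ h₁ (Xcf ω)) ∧
      Pr p (fun ω => h₂ (X ω) ≠ h₂ (Xcf ω)) ≤ 1 - γ / 2 :=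
  influence_unconstrained_general p hp hsum X Xcf φ ε γ hε hγ h
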